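/- arXiv:0901.3897 — 2 statements merged into one kernel-verified Lean document; each statement's English description precedes it below -/
import Mathlib

section
/- A finite simple graph G satisfies MSC if and only if G is an unmixed domain (i.e., G is unmixed and G is a domain). -/
variable {V : Type*} [Fintype V] [DecidableEq V]

/-- For `k ∈ ℕ`, a `k`-cover of `G` is a function from the vertices of `G` to `ℕ` that is
not identically zero and whose values at the two endpoints of any edge sum to at least `k`. -/
def IsCover (G : SimpleGraph V) (k : ℕ) (a : V → ℕ) : Prop :=
  a ≠ 0 ∧ ∀ i j : V, G.Adj i j → k ≤ a i + a j

/-- A `k`-cover is basic if it is not the pointwise sum of a `k`-cover and a `0`-cover. -/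
def IsBasicCover (G : SimpleGraph V) (k : ℕ) (a : V → ℕ) : Prop :=
  IsCover G k a ∧ ¬ ∃ b c : V → ℕ, IsCover G k b ∧ IsCover G 0 c ∧ a = b + c

/-- `G` is a domain if for all `s, t` with `s + t ≥ 1`, the pointwise sum of any `s` basic
`1`-covers and any `t` basic `2`-covers of `G` is a basic `(s + 2t)`-cover. -/
def IsGraphDomain (G : SimpleGraph V) : Prop :=
  ∀ s t : ℕ, 1 ≤ s + t → ∀ f : Fin s → V → ℕ, ∀ g : Fin t → V → ℕ,
    (∀ p, IsBasicCover G 1 (f p)) → (∀ q, IsBasicCover G 2 (g q)) →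
    IsBasicCover G (s + 2 * t) ((∑ p, f p) + (∑ q, g q))

/-- `G` is unmixed if all basic `1`-covers of `G` have the same norm. -/
def IsUnmixed (G : SimpleGraph V) : Prop :=
  ∀ a b : V → ℕ, IsBasicCover G 1 a → IsBasicCover G 1 b → ∑ v, a v = ∑ v, b v

/-- `G` satisfies WSC if it has at least one edge and every non-isolated vertex `i` has a
neighbour `j` such that any neighbour of `i` is adjacent to any neighbour of `j`. -/
def SatisfiesWSC (G : SimpleGraph V) : Prop :=
  (∃ i j : V, G.Adj i j) ∧
    ∀ i : V, (∃ x, G.Adj i x) →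
      ∃ j : V, G.Adj i j ∧ ∀ i' j' : V, G.Adj i i' → G.Adj j j' → G.Adj i' j'

/-- `G` satisfies SC if for every edge `{i, j}`, every neighbour `i'` of `i` and every
neighbour `j'` of `j`, one has `i' ≠ j'` and `{i', j'}` is an edge. -/
def SatisfiesSC (G : SimpleGraph V) : Prop :=
  ∀ i j i' j' : V, G.Adj i j → G.Adj i i' → G.Adj j j' → i' ≠ j' ∧ G.Adj i' j'

/-- `G` satisfies MSC if the set of non-isolated vertices of `G` is nonempty and carries a
perfect matching `M` (a matching of `G` whose vertex set is exactly the set of non-isolated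
vertices) such that for every edge `{i, j}` of `M`, every neighbour `i'` of `i` in `G` and
every neighbour `j'` of `j` in `G`, `{i', j'}` is an edge of `G`. -/
def SatisfiesMSC (G : SimpleGraph V) : Prop :=
  ∃ M : G.Subgraph, M.verts = {v : V | ∃ w, G.Adj v w} ∧ M.verts.Nonempty ∧
    M.IsMatching ∧
    ∀ i j : V, M.Adj i j → ∀ i' j' : V, G.Adj i i' → G.Adj j j' → G.Adj i' j'

/-- The graph `G^{0-1}`: its edges are the edges `{i, j}` of `G` such that `a i + a j = 1`
for every basic `1`-cover `a` of `G`.  (Its vertex set is interpreted as the set of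
non-isolated vertices of `G`; here it is defined on all of `V`, and the vertices of `G`
that are isolated stay isolated, so they can be excluded explicitly when needed.) -/
def ZeroOne (G : SimpleGraph V) : SimpleGraph V where
  Adj i j := G.Adj i j ∧ ∀ a : V → ℕ, IsBasicCover G 1 a → a i + a j = 1
  symm := by
    constructor
    intro i j h
    exact ⟨h.1.symm, fun a ha => by rw [add_comm]; exact h.2 a ha⟩
  loopless := by
    constructor
    intro i h
    exact G.irrefl h.1

/-- `A ∪ B` is a vertex bipartition of the connected component `C` of `H`, and the edges of
`H` inside `C` are exactly the pairs `{x, y}` with `x ∈ A` and `y ∈ B` (so the component is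
a complete bipartite graph on `A ∪ B`). -/
def IsCompBipartition (H : SimpleGraph V) (C : H.ConnectedComponent) (A B : Set V) : Prop :=
  A ∪ B = C.supp ∧ Disjoint A B ∧
    ∀ x ∈ C.supp, ∀ y ∈ C.supp,
      (H.Adj x y ↔ (x ∈ A ∧ y ∈ B) ∨ (x ∈ B ∧ y ∈ A))

/-- The graph `G⁺` obtained from `G` by attaching a pendant vertex to each vertex of `G`:
`Sum.inl v` is the original vertex `v`, and `Sum.inr v` is the pendant attached to `v`. -/
def GPlus (G : SimpleGraph V) : SimpleGraph (V ⊕ V) where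
  Adj x y :=
    match x, y with
    | Sum.inl u, Sum.inl v => G.Adj u v
    | Sum.inl u, Sum.inr v => u = v
    | Sum.inr u, Sum.inl v => u = v
    | Sum.inr _, Sum.inr _ => False
  symm := by
    constructor
    rintro (u | u) (v | v) h
    · exact h.symm
    · exact h.symm
    · exact h.symm
    · exact h.elim
  loopless := by
    constructor
    rintro (u | u) h
    · exact G.irrefl h
    · exact h

/-!
Basic `1`-covers are the indicators of minimal vertex covers, and a basic `k`-cover is tight
(`a i + a j = k`) on every edge `ij` whose end-neighbourhoods are completely joined. Under MSC every
basic cover is therefore tight on the matching and vanishes off it; such covers all have the same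
norm, and sums of them are again tight, hence basic.

Conversely, let `H = G^{0-1}`. Minimal vertex covers avoiding two non-adjacent vertices show that
the end-neighbourhoods of an `H`-edge are completely joined; so paths of length three in `H` close
up, and each component of `H` is complete bipartite, its sides cut out by any minimal vertex cover.
The domain property gives every non-isolated vertex an `H`-neighbour, and unmixedness forces the
two sides of each component to have the same size, by trading one side for the other in a suitable
minimal vertex cover. Bijections between the sides of the components form the matching of MSC.
-/

open SimpleGraph

namespace SimpleGraph

variable {W : Type*} {G : SimpleGraph W}

theorem IsVertexCover.sdiff_singleton {S : Set W} (hS : G.IsVertexCover S) {v : W}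
    (h : ∀ w, G.Adj v w → w ∈ S) : G.IsVertexCover (S \ {v}) := by
  intro i j hij
  by_cases hi : i = v
  · subst hi
    exact Or.inr ⟨h j hij, hij.ne'⟩
  by_cases hj : j = v
  · subst hj
    exact Or.inl ⟨h i hij.symm, hij.ne⟩
  exact (hS hij).imp (fun h => ⟨h, hi⟩) (fun h => ⟨h, hj⟩)

theorem _root_.Minimal.exists_adj_notMem {S : Set W} (hS : Minimal G.IsVertexCover S) {v : W}
    (hv : v ∈ S) : ∃ w, G.Adj v w ∧ w ∉ S := by
  by_contra! h
  exact hS.notMem_of_prop_sdiff_singleton (hS.1.sdiff_singleton h) hv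

theorem exists_minimal_isVertexCover_subset [Finite W] {C : Set W} (hC : G.IsVertexCover C) :
    ∃ S ⊆ C, Minimal G.IsVertexCover S :=
  exists_minimal_le_of_wellFoundedLT _ C hC

theorem exists_minimal_isVertexCover_notMem [Finite W] {x y : W} (h : ¬G.Adj x y) :
    ∃ S, Minimal G.IsVertexCover S ∧ x ∉ S ∧ y ∉ S := by
  have hC : G.IsVertexCover {x, y}ᶜ := by
    intro i j hij
    by_contra! hcon
    simp only [Set.mem_compl_iff, Set.mem_insert_iff, Set.mem_singleton_iff, not_not] at hcon
    rcases hcon with ⟨rfl | rfl, rfl | rfl⟩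
    · exact G.irrefl hij
    · exact h hij
    · exact h hij.symm
    · exact G.irrefl hij
  obtain ⟨S, hSC, hS⟩ := exists_minimal_isVertexCover_subset hC
  exact ⟨S, hS, fun hx => hSC hx (by simp), fun hy => hSC hy (by simp)⟩

theorem Reachable.exists_adj {x y : W} (hxy : G.Reachable x y) (hy : ∃ w, G.Adj y w) :
    ∃ w, G.Adj x w := by
  obtain ⟨p⟩ := hxy
  cases p with
  | nil => exact hy
  | cons h _ => exact ⟨_, h⟩

theorem Reachable.adj_of_mem_iff_notMem {S : Set W}
    (hcross : ∀ ⦃i j⦄, G.Adj i j → (i ∈ S ↔ j ∉ S))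
    (hpath : ∀ ⦃a b c d⦄, G.Adj a b → G.Adj b c → G.Adj c d → G.Adj a d)
    {x y : W} (hxy : G.Reachable x y) (hS : x ∈ S ↔ y ∉ S) : G.Adj x y := by
  obtain ⟨p⟩ := hxy
  suffices ((x ∈ S ↔ y ∉ S) → G.Adj x y) ∧
      ((x ∈ S ↔ y ∈ S) → x = y ∨ ∀ z, G.Adj x z → G.Adj y z) from this.1 hS
  clear hS
  induction p with
  | nil => exact ⟨fun h => by tauto, fun _ => Or.inl rfl⟩
  | @cons x u y h p ih =>
    have hxu := hcross h
    refine ⟨fun hxy => ?_, fun hxy => Or.inr fun z hz => hpath (ih.1 (by tauto)).symm h.symm hz⟩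
    rcases ih.2 (by tauto) with rfl | hu
    · exact h
    · exact (hu x h.symm).symm

theorem exists_isMatching_of_ncard_eq [Finite W] {S : Set W}
    (hcross : ∀ ⦃i j⦄, G.Adj i j → (i ∈ S ↔ j ∉ S))
    (hpath : ∀ ⦃a b c d⦄, G.Adj a b → G.Adj b c → G.Adj c d → G.Adj a d)
    (hcard : ∀ v, (∃ w, G.Adj v w) → ((G.connectedComponentMk v).supp ∩ S).ncard =
      ((G.connectedComponentMk v).supp \ S).ncard) :
    ∃ M : G.Subgraph, M.verts = {v | ∃ w, G.Adj v w} ∧ M.IsMatching := by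
  set X := {v | v ∈ S ∧ ∃ w, G.Adj v w}
  set Y := {v | v ∉ S ∧ ∃ w, G.Adj v w}
  have hfiber_card : ∀ (P : W → Prop) (c : G.ConnectedComponent),
      Nat.card {x : {v // P v} // G.connectedComponentMk x = c} =
        {v | P v ∧ G.connectedComponentMk v = c}.ncard := fun P c =>
    (Nat.card_congr (Equiv.subtypeSubtypeEquivSubtypeInter P (G.connectedComponentMk · = c))).trans
      (Nat.card_coe_set_eq {v | P v ∧ G.connectedComponentMk v = c})
  have hfiber : ∀ c : G.ConnectedComponent,
      Nat.card {x : X // G.connectedComponentMk x = c} =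
        Nat.card {y : Y // G.connectedComponentMk y = c} := by
    intro c
    rw [hfiber_card (· ∈ X), hfiber_card (· ∈ Y)]
    by_cases hc : ∃ v, (∃ w, G.Adj v w) ∧ G.connectedComponentMk v = c
    · obtain ⟨v, hv, rfl⟩ := hc
      convert hcard v hv using 2 <;> ext u <;>
        simp only [X, Y, Set.mem_ofPred_eq, Set.mem_inter_iff, Set.mem_sdiff,
          ConnectedComponent.mem_supp_iff] <;>
        exact ⟨fun h => ⟨h.2, h.1.1⟩,
          fun h => ⟨⟨h.2, (ConnectedComponent.exact h.1).exists_adj hv⟩, h.1⟩⟩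
    · push Not at hc
      have hempty : ∀ Q : W → Prop,
          {v | (Q v ∧ ∃ w, G.Adj v w) ∧ G.connectedComponentMk v = c} = ∅ :=
        fun Q => Set.eq_empty_of_forall_notMem fun v hv => hc v hv.1.2 hv.2
      simp only [X, Y, Set.mem_ofPred_eq, hempty]
  let φ : X ≃ Y := Equiv.ofFiberEquiv fun c => (Finite.card_eq.1 (hfiber c)).some
  have hφ : ∀ x, G.connectedComponentMk (φ x : W) = G.connectedComponentMk x :=
    Equiv.ofFiberEquiv_map (f := fun x : X => G.connectedComponentMk x)
      (g := fun y : Y => G.connectedComponentMk y) _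
  have hadj : ∀ x : X, G.Adj x (φ x) := fun x =>
    (ConnectedComponent.exact (hφ x).symm).adj_of_mem_iff_notMem hcross hpath
      (iff_of_true x.2.1 (φ x).2.1)
  obtain ⟨M, hMverts, hM⟩ := Subgraph.IsMatching.exists_of_disjoint_sets_of_equiv
    (Set.disjoint_left.2 fun v hX hY => hY.1 hX.1) φ hadj
  refine ⟨M, hMverts.trans ?_, hM⟩
  ext v
  by_cases hv : v ∈ S <;> simp [X, Y, hv]

theorem Subgraph.IsMatching.sum_eq_sum [Fintype W] {M : G.Subgraph} (hM : M.IsMatching)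
    {a b : W → ℕ} (ha : ∀ v ∉ M.verts, a v = 0) (hb : ∀ v ∉ M.verts, b v = 0)
    (hab : ∀ ⦃i j⦄, M.Adj i j → a i + a j = b i + b j) : ∑ v, a v = ∑ v, b v := by
  classical
  let σ : W → W := fun v => if h : v ∈ M.verts then (hM h).choose else v
  have hσ : ∀ v ∈ M.verts, M.Adj v (σ v) := fun v hv => by
    simp only [σ, dif_pos hv]
    exact (hM hv).choose_spec.1
  have hinv : Function.Involutive σ := fun v => by
    by_cases hv : v ∈ M.verts
    · exact hM.eq_of_adj_left (hσ _ (M.edge_vert (hσ v hv).symm)) (hσ v hv).symm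
    · simp [σ, hv]
  have hdouble : ∀ f : W → ℕ, ∑ v, (f v + f (σ v)) = 2 * ∑ v, f v := fun f => by
    rw [Finset.sum_add_distrib, two_mul]
    exact congrArg _ (Equiv.sum_comp (hinv.toPerm σ) f)
  have : ∑ v, (a v + a (σ v)) = ∑ v, (b v + b (σ v)) := Finset.sum_congr rfl fun v _ => by
    by_cases hv : v ∈ M.verts
    · exact hab (hσ v hv)
    · simp [σ, hv, ha v hv, hb v hv]
  rw [hdouble, hdouble] at this
  omega

end SimpleGraph

theorem Set.sum_indicator_one_eq_ncard {W : Type*} [Fintype W] (S : Set W) :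
    ∑ v, S.indicator (1 : W → ℕ) v = S.ncard := by
  classical
  simp [Set.indicator_apply, Finset.sum_boole, Set.ncard_eq_toFinset_card']

section BasicCover

variable {G : SimpleGraph V} {k : ℕ} {a : V → ℕ}

/-- Otherwise lowering `a v` by one would split off the `0`-cover `Pi.single v 1`, unless `a` is
`Pi.single v 1` itself; then an edge of `G` is tight at `v`. -/
theorem IsBasicCover.exists_adj_add_eq (hG : G ≠ ⊥) (hk : 1 ≤ k) (ha : IsBasicCover G k a)
    {v : V} (hv : a v ≠ 0) : ∃ w, G.Adj v w ∧ a v + a w = k := by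
  by_contra! hloose
  by_cases hb : a - Pi.single v 1 = 0
  · have hle : ∀ u, a u ≤ (Pi.single v 1 : V → ℕ) u := fun u =>
      Nat.sub_eq_zero_iff_le.1 (congrFun hb u)
    obtain ⟨p, q, hpq⟩ := ne_bot_iff_exists_adj.1 hG
    have hpq' := ha.1.2 p q hpq
    have hp := hle p
    have hq := hle q
    rcases eq_or_ne p v with rfl | hp'
    · have := hloose q hpq
      simp [hpq.ne'] at hp hq
      omega
    rcases eq_or_ne q v with rfl | hq'
    · have := hloose p hpq.symm
      simp [hp'] at hp hq
      omega
    simp [hp', hq'] at hp hq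
    omega
  apply ha.2
  refine ⟨a - Pi.single v 1, Pi.single v 1, ⟨hb, fun i j hij => ?_⟩,
    ⟨by simp, fun _ _ _ => Nat.zero_le _⟩, ?_⟩
  · have hij' := ha.1.2 i j hij
    rcases eq_or_ne i v with rfl | hi
    · have := hloose j hij
      simp [hij.ne']
      omega
    rcases eq_or_ne j v with rfl | hj
    · have := hloose i hij.symm
      simp [hi]
      omega
    simpa [hi, hj] using hij'
  · ext u
    rcases eq_or_ne u v with rfl | hu
    · simp
      omega
    · simp [hu]

theorem IsBasicCover.eq_zero_of_not_adj (hG : G ≠ ⊥) (hk : 1 ≤ k) (ha : IsBasicCover G k a)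
    {v : V} (hv : ¬∃ w, G.Adj v w) : a v = 0 := by
  by_contra h
  obtain ⟨w, hw, -⟩ := ha.exists_adj_add_eq hG hk h
  exact hv ⟨w, hw⟩

theorem isBasicCover_one_iff (hG : G ≠ ⊥) :
    IsBasicCover G 1 a ↔ ∃ S, Minimal G.IsVertexCover S ∧ a = S.indicator 1 := by
  constructor
  · intro ha
    have htight : ∀ v, a v ≠ 0 → ∃ w, G.Adj v w ∧ a w = 0 ∧ a v = 1 := fun v hv => by
      obtain ⟨w, hvw, h⟩ := ha.exists_adj_add_eq hG le_rfl hv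
      exact ⟨w, hvw, by omega, by omega⟩
    refine ⟨Function.support a, ⟨fun i j hij => ?_, fun T hT hTS v hv => ?_⟩, ?_⟩
    · have := ha.1.2 i j hij
      simp only [Function.mem_support]
      omega
    · obtain ⟨w, hvw, hw, -⟩ := htight v hv
      exact (hT hvw).resolve_right fun hwT => hTS hwT hw
    · ext v
      by_cases hv : a v = 0
      · simp [hv]
      · obtain ⟨-, -, -, hv1⟩ := htight v hv
        simp [hv1]
  · rintro ⟨S, hS, rfl⟩
    obtain ⟨v, hv⟩ : S.Nonempty := by
      rw [Set.nonempty_iff_ne_empty]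
      rintro rfl
      exact hG (isVertexCover_empty.1 hS.1)
    refine ⟨⟨Function.ne_iff.2 ⟨v, by simp [hv]⟩, fun i j hij => ?_⟩, ?_⟩
    · rcases hS.1 hij with h | h <;> simp [h]
    rintro ⟨b, c, hb, hc, hbc⟩
    obtain ⟨u, hu⟩ := Function.ne_iff.1 hc.1
    have hsplit := congrFun hbc
    simp only [Pi.add_apply, Pi.zero_apply] at hsplit hu
    have huS : u ∈ S := by
      by_contra h
      have := hsplit u
      simp [h] at this
      omega
    obtain ⟨w, huw, hwS⟩ := hS.exists_adj_notMem huS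
    have h1 := hsplit u
    have h2 := hsplit w
    have := hb.2 u w huw
    simp [huS, hwS] at h1 h2
    omega

theorem IsUnmixed.ncard_eq (hunm : IsUnmixed G) (hG : G ≠ ⊥) {S T : Set V}
    (hS : Minimal G.IsVertexCover S) (hT : Minimal G.IsVertexCover T) : S.ncard = T.ncard := by
  rw [← Set.sum_indicator_one_eq_ncard, ← Set.sum_indicator_one_eq_ncard]
  exact hunm _ _ ((isBasicCover_one_iff hG).2 ⟨S, hS, rfl⟩)
    ((isBasicCover_one_iff hG).2 ⟨T, hT, rfl⟩)

end BasicCover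

theorem zeroOne_le {W : Type*} {G : SimpleGraph W} : ZeroOne G ≤ G := fun _ _ h => h.1

section ZeroOne

variable {G : SimpleGraph V} {i j : V}

theorem ZeroOne.mem_iff_notMem (h : (ZeroOne G).Adj i j) {S : Set V}
    (hS : Minimal G.IsVertexCover S) : i ∈ S ↔ j ∉ S := by
  have hG : G ≠ ⊥ := ne_bot_iff_exists_adj.2 ⟨i, j, h.1⟩
  have := h.2 _ ((isBasicCover_one_iff hG).2 ⟨S, hS, rfl⟩)
  by_cases hi : i ∈ S <;> by_cases hj : j ∈ S <;> simp_all

theorem zeroOne_adj_iff : (ZeroOne G).Adj i j ↔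
    G.Adj i j ∧ ∀ S, Minimal G.IsVertexCover S → (i ∈ S ↔ j ∉ S) := by
  refine ⟨fun h => ⟨h.1, fun S hS => ZeroOne.mem_iff_notMem h hS⟩,
    fun ⟨hij, h⟩ => ⟨hij, fun a ha => ?_⟩⟩
  obtain ⟨S, hS, rfl⟩ := (isBasicCover_one_iff (ne_bot_iff_exists_adj.2 ⟨i, j, hij⟩)).1 ha
  have := h S hS
  by_cases hi : i ∈ S <;> simp_all

theorem ZeroOne.adj_of_adj_of_adj (h : (ZeroOne G).Adj i j) {i' j' : V} (hi : G.Adj i i')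
    (hj : G.Adj j j') : G.Adj i' j' := by
  by_contra hcon
  obtain ⟨S, hS, hi', hj'⟩ := exists_minimal_isVertexCover_notMem hcon
  exact (ZeroOne.mem_iff_notMem h hS).1 ((hS.1 hi).resolve_right hi') ((hS.1 hj).resolve_right hj')

theorem ZeroOne.adj_of_adj_of_adj_of_adj {b c d : V} (h₁ : (ZeroOne G).Adj i b)
    (h₂ : (ZeroOne G).Adj b c) (h₃ : (ZeroOne G).Adj c d) : (ZeroOne G).Adj i d := by
  refine zeroOne_adj_iff.2 ⟨ZeroOne.adj_of_adj_of_adj h₂ h₁.1.symm h₃.1, fun S hS => ?_⟩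
  have := ZeroOne.mem_iff_notMem h₁ hS
  have := ZeroOne.mem_iff_notMem h₂ hS
  have := ZeroOne.mem_iff_notMem h₃ hS
  tauto

theorem ZeroOne.isIndepSet {A : Set V} {b : V} (hb : ∀ a ∈ A, (ZeroOne G).Adj b a) :
    G.IsIndepSet A := fun a ha a' ha' _ haa' =>
  G.irrefl (ZeroOne.adj_of_adj_of_adj (hb a ha) (hb a' ha').1 haa')

end ZeroOne

theorem IsGraphDomain.isBasicCover_sum {W : Type*} {G : SimpleGraph W} (hdom : IsGraphDomain G)
    {s : ℕ} (hs : 1 ≤ s) {f : Fin s → W → ℕ} (hf : ∀ p, IsBasicCover G 1 (f p)) :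
    IsBasicCover G s (∑ p, f p) := by
  simpa using hdom s 0 (by omega) f Fin.elim0 hf fun q => q.elim0

theorem IsGraphDomain.ne_bot {W : Type*} [DecidableEq W] [Nonempty W] {G : SimpleGraph W}
    (hdom : IsGraphDomain G) : G ≠ ⊥ := by
  rintro rfl
  obtain ⟨v⟩ := ‹Nonempty W›
  have hcover : ∀ k, IsCover ⊥ k (Pi.single v 1) := fun k => ⟨by simp, fun _ _ h => h.elim⟩
  have hbasic : IsBasicCover ⊥ 1 (Pi.single v 1) := by
    refine ⟨hcover 1, ?_⟩
    rintro ⟨b, c, hb, hc, hbc⟩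
    obtain ⟨u, hu⟩ := Function.ne_iff.1 hb.1
    obtain ⟨w, hw⟩ := Function.ne_iff.1 hc.1
    have h1 := congrFun hbc u
    have h2 := congrFun hbc w
    rcases eq_or_ne u v with rfl | hu'
    · rcases eq_or_ne w u with rfl | hw'
      · simp at h1 hu hw
        omega
      · simp [hw'] at h2 hw
        omega
    · simp [hu'] at h1 hu
      omega
  refine (hdom.isBasicCover_sum (s := 2) (by norm_num) fun _ => hbasic).2
    ⟨Pi.single v 1, Pi.single v 1, hcover 2, hcover 0, by simp [two_mul]⟩

/-- Minimal covers containing both `i` and each of its neighbours add up to a basic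
`deg i`-cover that is not tight at `i`. -/
theorem IsGraphDomain.exists_zeroOne_adj {G : SimpleGraph V} (hdom : IsGraphDomain G) {i x : V}
    (hix : G.Adj i x) : ∃ j, (ZeroOne G).Adj i j := by
  by_contra! hno
  have hG : G ≠ ⊥ := ne_bot_iff_exists_adj.2 ⟨i, x, hix⟩
  have hcov : ∀ j : G.neighborSet i,
      ∃ S, Minimal G.IsVertexCover S ∧ i ∈ S ∧ (j : V) ∈ S := by
    rintro ⟨j, hj⟩
    have := hno j
    rw [zeroOne_adj_iff] at this
    push Not at this
    obtain ⟨S, hS, hiff⟩ := this hj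
    have := hS.1 hj
    exact ⟨S, hS, by tauto⟩
  choose T hT hiT hjT using hcov
  have : Nonempty (G.neighborSet i) := ⟨⟨x, hix⟩⟩
  set n := Nat.card (G.neighborSet i)
  have hn : 1 ≤ n := Finite.card_pos
  let e := Finite.equivFin (G.neighborSet i)
  let f : Fin n → V → ℕ := fun p => (T (e.symm p)).indicator 1
  have hu := hdom.isBasicCover_sum hn (f := f)
    fun p => (isBasicCover_one_iff hG).2 ⟨_, hT _, rfl⟩
  have hui : (∑ p, f p) i = n := by simp [f, hiT]
  obtain ⟨q, hiq, hq⟩ := hu.exists_adj_add_eq hG hn (v := i) (by omega)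
  have : 1 ≤ (∑ p, f p) q := by
    rw [Finset.sum_apply]
    refine le_trans ?_ (Finset.single_le_sum (fun p _ => Nat.zero_le (f p q))
      (Finset.mem_univ (e ⟨q, hiq⟩)))
    simp only [f, Equiv.symm_apply_apply]
    simp [hjT]
  omega

section ZeroOneComponent

variable {G : SimpleGraph V} {A B : Set V}

theorem not_adj_of_zeroOne_adj_of_adj (hAB : ∀ a ∈ A, ∀ b ∈ B, (ZeroOne G).Adj a b)
    (hA : A.Nonempty) (hclosed : ∀ ⦃x y⦄, (ZeroOne G).Adj x y → y ∈ B → x ∈ A ∪ B)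
    {z w b : V} (hzA : z ∉ A) (hb : b ∈ B) (hzb : G.Adj z b) (hzw : (ZeroOne G).Adj z w) :
    ∀ y ∈ A ∪ B, ¬G.Adj w y := by
  obtain ⟨a₀, ha₀⟩ := hA
  rintro y (hy | hy) hwy
  · have hzb' : (ZeroOne G).Adj z b := by
      refine zeroOne_adj_iff.2 ⟨hzb, fun S hS => ⟨fun hzS hbS => ?_, fun hbS => ?_⟩⟩
      · have hyS := (hS.1 hwy).resolve_left ((ZeroOne.mem_iff_notMem hzw hS).1 hzS)
        exact (ZeroOne.mem_iff_notMem (hAB y hy b hb) hS).1 hyS hbS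
      · exact (hS.1 hzb).resolve_right hbS
    rcases hclosed hzb' hb with hz | hz
    · exact hzA hz
    · exact ZeroOne.isIndepSet (hAB a₀ ha₀) hz hb hzb.ne hzb
  · have hwb : G.Adj w b :=
      (ZeroOne.adj_of_adj_of_adj (hAB a₀ ha₀ y hy) (hAB a₀ ha₀ b hb).1 hwy.symm).symm
    exact G.irrefl (ZeroOne.adj_of_adj_of_adj hzw hzb hwb)

/-- Take `D` minimal among the covers missing `A` and containing the set `N` of neighbours of `B`
outside `A`. A vertex of `N` removable from `D` would have a `ZeroOne G`-partner outside `N` that is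
removable as well. -/
theorem exists_minimal_isVertexCover_disjoint_of_zeroOne_adj (hdom : IsGraphDomain G)
    (hAB : ∀ a ∈ A, ∀ b ∈ B, (ZeroOne G).Adj a b) (hA : A.Nonempty) (hB : B.Nonempty)
    (hclosed : ∀ ⦃x y⦄, (ZeroOne G).Adj x y → y ∈ B → x ∈ A ∪ B) :
    ∃ D, Minimal G.IsVertexCover D ∧ Disjoint A D ∧
      ∀ x ∉ A, ∀ b ∈ B, G.Adj x b → x ∈ D := by
  obtain ⟨b₀, hb₀⟩ := hB
  have hAind : G.IsIndepSet A := ZeroOne.isIndepSet fun a ha => (hAB a ha b₀ hb₀).symm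
  set N := {x | x ∉ A ∧ ∃ b ∈ B, G.Adj x b}
  obtain ⟨D, hDA, hD⟩ := exists_minimal_le_of_wellFoundedLT
    (fun T => G.IsVertexCover T ∧ N ⊆ T) Aᶜ
    ⟨isVertexCover_compl.2 hAind, fun _ hx => hx.1⟩
  refine ⟨D, ?_, Set.disjoint_right.2 fun x hx => hDA hx,
    fun x hx b hb hxb => hD.1.2 ⟨hx, b, hb, hxb⟩⟩
  rw [Set.minimal_iff_forall_sdiff_singleton fun _ _ h hts => h.subset hts]
  refine ⟨hD.1.1, fun v hvD hv => ?_⟩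
  have hdrop : ∀ u ∉ N, G.IsVertexCover (D \ {u}) → u ∉ D := fun u hu hcov =>
    hD.notMem_of_prop_sdiff_singleton
      ⟨hcov, fun x hx => ⟨hD.1.2 hx, fun h => hu (h ▸ hx)⟩⟩
  by_cases hvN : v ∈ N
  · obtain ⟨hvA, b, hb, hvb⟩ := hvN
    obtain ⟨w, hvw⟩ := hdom.exists_zeroOne_adj hvb
    have hw := not_adj_of_zeroOne_adj_of_adj hAB hA hclosed hvA hb hvb hvw
    refine hdrop w (fun ⟨_, b', hb', hwb'⟩ => hw b' (Or.inr hb') hwb')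
      (hD.1.1.sdiff_singleton fun u hwu => ?_) ((hv hvw.1).resolve_left fun h => h.2 rfl).1
    exact hD.1.2 ⟨fun huA => hw u (Or.inl huA) hwu, b, hb,
      (ZeroOne.adj_of_adj_of_adj hvw hvb hwu).symm⟩
  · exact hdrop v hvN hv hvD

/-- Trading `B` for `A` in the cover `D` above leaves a cover, and by unmixedness its minimal
subcovers are as large as `D`. -/
theorem IsUnmixed.ncard_le_of_zeroOne_adj (hunm : IsUnmixed G) (hdom : IsGraphDomain G)
    (hAB : ∀ a ∈ A, ∀ b ∈ B, (ZeroOne G).Adj a b) (hA : A.Nonempty) (hB : B.Nonempty)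
    (hclosed : ∀ ⦃x y⦄, (ZeroOne G).Adj x y → y ∈ B → x ∈ A ∪ B) :
    B.ncard ≤ A.ncard := by
  obtain ⟨D, hD, hAD, hND⟩ :=
    exists_minimal_isVertexCover_disjoint_of_zeroOne_adj hdom hAB hA hB hclosed
  obtain ⟨a₀, ha₀⟩ := hA
  have hBind : G.IsIndepSet B := ZeroOne.isIndepSet (hAB a₀ ha₀)
  have hBD : B ⊆ D := fun b hb =>
    (hD.1 (hAB a₀ ha₀ b hb).1).resolve_left (Set.disjoint_left.1 hAD ha₀)
  have hcover : G.IsVertexCover (D \ B ∪ A) := by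
    have key : ∀ ⦃x y⦄, G.Adj x y → y ∉ A → x ∈ D →
        x ∈ D \ B ∪ A ∨ y ∈ D \ B ∪ A := by
      intro x y hxy hy hx
      by_cases hxB : x ∈ B
      · exact Or.inr (Or.inl ⟨hND y hy x hxB hxy.symm, fun hyB => hBind hxB hyB hxy.ne hxy⟩)
      · exact Or.inl (Or.inl ⟨hx, hxB⟩)
    intro p q hpq
    by_cases hp : p ∈ A
    · exact Or.inl (Or.inr hp)
    by_cases hq : q ∈ A
    · exact Or.inr (Or.inr hq)
    rcases hD.1 hpq with h | h
    · exact key hpq hq h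
    · exact (key hpq.symm hp h).symm
  obtain ⟨F, hFsub, hF⟩ := exists_minimal_isVertexCover_subset hcover
  have hG : G ≠ ⊥ := ne_bot_iff_exists_adj.2 ⟨_, _, (hAB a₀ ha₀ _ hB.some_mem).1⟩
  have hFD := hunm.ncard_eq hG hF hD
  have h₁ := Set.ncard_le_ncard hFsub
  have h₂ := Set.ncard_union_le (D \ B) A
  have h₃ := Set.ncard_sdiff hBD
  have h₄ := Set.ncard_le_ncard hBD
  omega

theorem IsUnmixed.ncard_inter_eq_ncard_sdiff (hunm : IsUnmixed G) (hdom : IsGraphDomain G)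
    {S : Set V} (hS : Minimal G.IsVertexCover S) {v w : V} (hvw : (ZeroOne G).Adj v w) :
    (((ZeroOne G).connectedComponentMk v).supp ∩ S).ncard =
      (((ZeroOne G).connectedComponentMk v).supp \ S).ncard := by
  set C := ((ZeroOne G).connectedComponentMk v).supp
  have hcross : ∀ ⦃i j⦄, (ZeroOne G).Adj i j → (i ∈ S ↔ j ∉ S) := fun i j h =>
    ZeroOne.mem_iff_notMem h hS
  have hAB : ∀ a ∈ C ∩ S, ∀ b ∈ C \ S, (ZeroOne G).Adj a b := fun a ha b hb =>
    Reachable.adj_of_mem_iff_notMem hcross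
      (fun _ _ _ _ => ZeroOne.adj_of_adj_of_adj_of_adj)
      (ConnectedComponent.exact (ha.1.trans hb.1.symm)) (iff_of_true ha.2 hb.2)
  have hvC : v ∈ C := rfl
  have hwC : w ∈ C := (ConnectedComponent.connectedComponentMk_eq_of_adj hvw).symm
  have hsides : (C ∩ S).Nonempty ∧ (C \ S).Nonempty := by
    by_cases hv : v ∈ S
    · exact ⟨⟨v, hvC, hv⟩, ⟨w, hwC, (hcross hvw).1 hv⟩⟩
    · exact ⟨⟨w, hwC, not_not.1 (mt (hcross hvw).2 hv)⟩, ⟨v, hvC, hv⟩⟩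
  have hclosed : ∀ ⦃x y⦄, (ZeroOne G).Adj x y → y ∈ C → x ∈ C ∩ S ∪ C \ S := by
    intro x y hxy hy
    rw [Set.inter_union_sdiff]
    exact (ConnectedComponent.connectedComponentMk_eq_of_adj hxy).trans hy
  refine le_antisymm ?_ (hunm.ncard_le_of_zeroOne_adj hdom hAB hsides.1 hsides.2
    fun x y hxy hy => hclosed hxy hy.1)
  exact hunm.ncard_le_of_zeroOne_adj hdom (fun b hb a ha => (hAB a ha b hb).symm) hsides.2
    hsides.1 fun x y hxy hy => Set.union_comm _ _ ▸ hclosed hxy hy.1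

theorem IsUnmixed.satisfiesMSC (hunm : IsUnmixed G) (hdom : IsGraphDomain G) (hG : G ≠ ⊥) :
    SatisfiesMSC G := by
  obtain ⟨S, -, hS⟩ := exists_minimal_isVertexCover_subset (G := G) (C := Set.univ) (by simp)
  obtain ⟨M, hMverts, hM⟩ := exists_isMatching_of_ncard_eq
    (fun i j h => ZeroOne.mem_iff_notMem h hS) (fun _ _ _ _ => ZeroOne.adj_of_adj_of_adj_of_adj)
    fun v ⟨w, hvw⟩ => hunm.ncard_inter_eq_ncard_sdiff hdom hS hvw
  have hverts : {v | ∃ w, (ZeroOne G).Adj v w} = {v | ∃ w, G.Adj v w} :=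
    Set.ext fun _ =>
      ⟨fun ⟨w, h⟩ => ⟨w, h.1⟩, fun ⟨_, h⟩ => hdom.exists_zeroOne_adj h⟩
  obtain ⟨p, q, hpq⟩ := ne_bot_iff_exists_adj.1 hG
  refine ⟨M.map (Hom.ofLE zeroOne_le), ?_, ⟨p, ?_⟩, hM.map_ofLE _, fun i j hij => ?_⟩
  · simp [hMverts, hverts]
  · simpa [hMverts, hverts] using ⟨q, hpq⟩
  · simp only [Subgraph.map_adj, Hom.coe_ofLE, Relation.map_id_id] at hij
    exact fun _ _ => ZeroOne.adj_of_adj_of_adj (M.adj_sub hij)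

end ZeroOneComponent

section Matching

variable {G : SimpleGraph V} {k : ℕ}

/-- Otherwise tight edges `ii'` and `jj'` would leave the edge `i'j'` undercovered. -/
theorem IsBasicCover.add_eq_of_adj (hk : 1 ≤ k) {a : V → ℕ} (ha : IsBasicCover G k a)
    {i j : V} (hij : G.Adj i j) (hsq : ∀ i' j', G.Adj i i' → G.Adj j j' → G.Adj i' j') :
    a i + a j = k := by
  have hG : G ≠ ⊥ := ne_bot_iff_exists_adj.2 ⟨i, j, hij⟩
  have hcov := ha.1.2 i j hij
  by_contra hne
  rcases eq_or_ne (a i) 0 with hi | hi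
  · obtain ⟨j', -, hj'⟩ := ha.exists_adj_add_eq hG hk (v := j) (by omega)
    omega
  rcases eq_or_ne (a j) 0 with hj | hj
  · obtain ⟨i', -, hi'⟩ := ha.exists_adj_add_eq hG hk hi
    omega
  obtain ⟨i', hii', hi'⟩ := ha.exists_adj_add_eq hG hk hi
  obtain ⟨j', hjj', hj'⟩ := ha.exists_adj_add_eq hG hk hj
  have := ha.1.2 i' j' (hsq i' j' hii' hjj')
  omega

theorem isBasicCover_of_add_eq {W : Type*} {G : SimpleGraph W} {M : G.Subgraph} {k : ℕ}
    (hM : M.IsMatching) {u : W → ℕ} (hu : IsCover G k u)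
    (hout : ∀ v ∉ M.verts, u v = 0) (hadd : ∀ ⦃i j⦄, M.Adj i j → u i + u j = k) :
    IsBasicCover G k u := by
  refine ⟨hu, ?_⟩
  rintro ⟨b, c, hb, hc, rfl⟩
  obtain ⟨v, hv⟩ := Function.ne_iff.1 hc.1
  simp only [Pi.add_apply, Pi.zero_apply] at hout hadd hv
  by_cases hvM : v ∈ M.verts
  · obtain ⟨w, hvw, -⟩ := hM hvM
    have := hadd hvw
    have := hb.2 v w (M.adj_sub hvw)
    omega
  · have := hout v hvM
    omega

theorem SatisfiesMSC.exists_isBasicCover_iff (h : SatisfiesMSC G) :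
    ∃ M : G.Subgraph, M.IsMatching ∧ M.verts.Nonempty ∧
      ∀ k, 1 ≤ k → ∀ a, IsCover G k a → (IsBasicCover G k a ↔
        (∀ v ∉ M.verts, a v = 0) ∧ ∀ ⦃i j⦄, M.Adj i j → a i + a j = k) := by
  obtain ⟨M, hverts, hne, hM, hsq⟩ := h
  have hG : G ≠ ⊥ := by
    obtain ⟨v, hv⟩ := hne
    rw [hverts] at hv
    obtain ⟨w, hvw⟩ := hv
    exact ne_bot_iff_exists_adj.2 ⟨v, w, hvw⟩
  refine ⟨M, hM, hne, fun k hk a hcov => ⟨fun ha => ⟨fun v hv => ?_, fun i j hij => ?_⟩,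
    fun ⟨hout, hadd⟩ => isBasicCover_of_add_eq hM hcov hout hadd⟩⟩
  · exact ha.eq_zero_of_not_adj hG hk (by simpa [hverts] using hv)
  · exact ha.add_eq_of_adj hk (M.adj_sub hij) (hsq i j hij)

theorem SatisfiesMSC.isUnmixed (h : SatisfiesMSC G) : IsUnmixed G := by
  obtain ⟨M, hM, -, hbasic⟩ := h.exists_isBasicCover_iff
  intro a b ha hb
  obtain ⟨ha₀, ha₁⟩ := (hbasic 1 le_rfl a ha.1).1 ha
  obtain ⟨hb₀, hb₁⟩ := (hbasic 1 le_rfl b hb.1).1 hb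
  exact hM.sum_eq_sum ha₀ hb₀ fun i j hij => (ha₁ hij).trans (hb₁ hij).symm

theorem SatisfiesMSC.isGraphDomain (h : SatisfiesMSC G) : IsGraphDomain G := by
  obtain ⟨M, hM, ⟨v, hv⟩, hbasic⟩ := h.exists_isBasicCover_iff
  intro s t hst f g hf hg
  have htf := fun p => (hbasic 1 le_rfl _ (hf p).1).1 (hf p)
  have htg := fun q => (hbasic 2 (by norm_num) _ (hg q).1).1 (hg q)
  have hsum : ∀ i j, ((∑ p, f p) + ∑ q, g q) i + ((∑ p, f p) + ∑ q, g q) j =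
      ∑ p, (f p i + f p j) + ∑ q, (g q i + g q j) := fun i j => by
    simp only [Pi.add_apply, Finset.sum_apply, Finset.sum_add_distrib]
    ring
  have hadd : ∀ ⦃i j⦄, M.Adj i j →
      ((∑ p, f p) + ∑ q, g q) i + ((∑ p, f p) + ∑ q, g q) j = s + 2 * t := fun i j hij => by
    rw [hsum]
    simp [(htf _).2 hij, (htg _).2 hij, mul_comm]
  obtain ⟨w, hvw, -⟩ := hM hv
  have hcov : IsCover G (s + 2 * t) ((∑ p, f p) + ∑ q, g q) := by
    refine ⟨fun h0 => ?_, fun i j hij => ?_⟩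
    · have := hadd hvw
      simp only [h0, Pi.zero_apply] at this
      omega
    · have h₁ : ∑ _p : Fin s, 1 ≤ ∑ p, (f p i + f p j) :=
        Finset.sum_le_sum fun p _ => (hf p).1.2 i j hij
      have h₂ : ∑ _q : Fin t, 2 ≤ ∑ q, (g q i + g q j) :=
        Finset.sum_le_sum fun q _ => (hg q).1.2 i j hij
      simp only [Finset.sum_const, Finset.card_univ, Fintype.card_fin, smul_eq_mul] at h₁ h₂
      rw [hsum]
      omega
  refine (hbasic _ (by omega) _ hcov).2 ⟨fun u hu => ?_, hadd⟩
  simp [(htf _).1 u hu, (htg _).1 u hu]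

end Matching

/-- A finite simple graph `G` satisfies MSC if and only if `G` is an unmixed
domain. -/
theorem msc_iff_unmixed_domain [Nonempty V] (G : SimpleGraph V) :
    SatisfiesMSC G ↔ (IsUnmixed G ∧ IsGraphDomain G) :=
  ⟨fun h => ⟨h.isUnmixed, h.isGraphDomain⟩,
    fun ⟨hunm, hdom⟩ => hunm.satisfiesMSC hdom hdom.ne_bot⟩
end

section
/- Let G be a finite simple graph with at least one edge. Then G is a domain if and only if the graph G^{0-1} has no isolated vertices (i.e., every vertex of G^{0-1} lies on an edge of G^{0-1}). -/
/-!
A basic `k`-cover `a` (`k ≥ 1`, `G` with an edge) is tight at each vertex `v` with `a v > 0`: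
some neighbour `x` has `a v + a x = k`, otherwise `a` could be lowered by one at `v`; conversely
a `k`-cover tight at all such vertices is basic.

If every non-isolated vertex `v` has a neighbour `j` in `G^{0-1}`, then every basic `1`-cover
sums to `1` and every basic `2`-cover to `2` on `{v, j}`, so a sum of `s` basic `1`-covers and
`t` basic `2`-covers is tight at `v`, hence basic. If instead `i` has no neighbour in `G^{0-1}`,
then for each neighbour `q` of `i` some basic `1`-cover is `1` at both `i` and `q`. Summing one
basic `1`-cover per vertex `r`, each `1` at `i` and also at `r` when `r` is a neighbour of `i`,
gives a `|V|`-cover with value `|V|` at `i` and positive values at all neighbours of `i`: it is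
not tight at `i`, so it is not basic.
-/
variable {V : Type*} [Fintype V] [DecidableEq V]

variable {α : Type*} {G : SimpleGraph α} {k : ℕ} {a : α → ℕ}

theorem isCover_of_adj {i j : α} (hij : G.Adj i j) (hk : 1 ≤ k)
    (h : ∀ i j, G.Adj i j → k ≤ a i + a j) : IsCover G k a := by
  refine ⟨fun ha => ?_, h⟩
  have := h i j hij
  simp only [ha, Pi.zero_apply] at this
  omega

theorem isBasicCover_of_tight (ha : IsCover G k a)
    (htight : ∀ v, 0 < a v → ∃ x, G.Adj v x ∧ a v + a x = k) : IsBasicCover G k a := by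
  refine ⟨ha, ?_⟩
  rintro ⟨b, c, hb, hc, rfl⟩
  obtain ⟨v, hv⟩ := Function.ne_iff.mp hc.1
  simp only [Pi.add_apply, Pi.zero_apply] at htight hv
  obtain ⟨x, hvx, hsum⟩ := htight v (by omega)
  have := hb.2 v x hvx
  omega

theorem IsBasicCover.exists_tight (hG : ∃ i j, G.Adj i j) (hk : 1 ≤ k)
    (ha : IsBasicCover G k a) {v : α} (hv : 0 < a v) : ∃ x, G.Adj v x ∧ a v + a x = k := by
  classical
  by_contra! hslack
  obtain ⟨i, j, hij⟩ := hG
  have hcover : ∀ p q, G.Adj p q →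
      k ≤ (a - Pi.single v 1 : α → ℕ) p + (a - Pi.single v 1 : α → ℕ) q := by
    intro p q hpq
    have hpq' := ha.1.2 p q hpq
    rcases eq_or_ne p v with rfl | hp
    · have := hslack q hpq
      simp [hpq.ne.symm]
      omega
    rcases eq_or_ne q v with rfl | hq
    · have := hslack p hpq.symm
      simp [hp]
      omega
    simpa [Pi.single_apply, hp, hq] using hpq'
  refine ha.2 ⟨a - Pi.single v 1, Pi.single v 1, isCover_of_adj hij hk hcover,
    ⟨by simp, fun _ _ _ => Nat.zero_le _⟩, ?_⟩
  refine (tsub_add_cancel_of_le fun u => ?_).symm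
  rcases eq_or_ne u v with rfl | hu <;> simp [*]
  omega

theorem IsBasicCover.apply_le (hG : ∃ i j, G.Adj i j) (hk : 1 ≤ k) (ha : IsBasicCover G k a)
    (v : α) : a v ≤ k := by
  rcases Nat.eq_zero_or_pos (a v) with hv | hv
  · omega
  · obtain ⟨x, -, hx⟩ := ha.exists_tight hG hk hv
    omega

theorem IsCover.exists_isBasicCover_le [Finite α] (ha : IsCover G k a) :
    ∃ b, IsBasicCover G k b ∧ b ≤ a := by
  obtain ⟨b, hba, hb, hmin⟩ := exists_minimal_le_of_wellFoundedLT (IsCover G k) a ha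
  refine ⟨b, ⟨hb, ?_⟩, hba⟩
  rintro ⟨b', c, hb', hc, rfl⟩
  exact hc.1 (le_antisymm (by simpa using hmin hb' le_self_add) bot_le)

/-- If `g v + g j ≥ 3`, tight neighbours `u` of `v` and `w` of `j` satisfy `g u + g w ≤ 1`;
a basic `1`-cover below the indicator of the complement of `{u, w}` is then `1` at both `v`
and `j`. -/
theorem IsBasicCover.add_eq_two_of_zeroOne_adj [Finite α] (hG : ∃ i j, G.Adj i j)
    {g : α → ℕ} (hg : IsBasicCover G 2 g) {v j : α} (hvj : (ZeroOne G).Adj v j) :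
    g v + g j = 2 := by
  classical
  have hcov := hg.1.2 v j hvj.1
  by_contra hne
  have hv := hg.apply_le hG (by norm_num) v
  have hj := hg.apply_le hG (by norm_num) j
  obtain ⟨u, hvu, hu⟩ := hg.exists_tight hG (by norm_num) (show 0 < g v by omega)
  obtain ⟨w, hjw, hw⟩ := hg.exists_tight hG (by norm_num) (show 0 < g j by omega)
  have hoff : IsCover G 1 (fun x => if x = u ∨ x = w then 0 else 1) := by
    refine isCover_of_adj hvu le_rfl fun p q hpq => ?_
    by_cases hp : p = u ∨ p = w
    · by_cases hq : q = u ∨ q = w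
      · have := hg.1.2 p q hpq
        rcases hp with rfl | rfl <;> rcases hq with rfl | rfl <;>
          first | exact absurd rfl hpq.ne | omega
      · simp [hq]
    · simp [hp]
  obtain ⟨b, hb, hba⟩ := hoff.exists_isBasicCover_le
  have hbu : b u = 0 := Nat.eq_zero_of_le_zero (by simpa using hba u)
  have hbw : b w = 0 := Nat.eq_zero_of_le_zero (by simpa using hba w)
  have := hb.1.2 v u hvu
  have := hb.1.2 j w hjw
  have := hvj.2 b hb
  omega

theorem isGraphDomain_of_forall_exists_zeroOne_adj [Finite α] (hG : ∃ i j, G.Adj i j)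
    (hzo : ∀ i, (∃ x, G.Adj i x) → ∃ j, (ZeroOne G).Adj i j) : IsGraphDomain G := by
  intro s t hst f g hf hg
  have hsum : ∀ i j, ((∑ p, f p) + ∑ q, g q) i + ((∑ p, f p) + ∑ q, g q) j =
      (∑ p, (f p i + f p j)) + ∑ q, (g q i + g q j) := by
    intro i j
    simp only [Pi.add_apply, Finset.sum_apply, Finset.sum_add_distrib]
    ring
  have ⟨i₀, j₀, h₀⟩ := hG
  refine isBasicCover_of_tight (isCover_of_adj h₀ (by omega) fun i j hij => ?_) fun v hv => ?_
  · rw [hsum]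
    calc s + 2 * t = (∑ _p : Fin s, 1) + ∑ _q : Fin t, 2 := by simp [mul_comm]
      _ ≤ _ := add_le_add (Finset.sum_le_sum fun p _ => (hf p).1.2 i j hij)
          (Finset.sum_le_sum fun q _ => (hg q).1.2 i j hij)
  have hv' : ∃ x, G.Adj v x := by
    simp only [Pi.add_apply, Finset.sum_apply] at hv
    rcases add_pos_iff.mp hv with hfv | hgv
    · obtain ⟨p, -, hp⟩ := Finset.sum_pos_iff.mp hfv
      exact ((hf p).exists_tight hG le_rfl hp).imp fun _ => And.left
    · obtain ⟨q, -, hq⟩ := Finset.sum_pos_iff.mp hgv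
      exact ((hg q).exists_tight hG (by norm_num) hq).imp fun _ => And.left
  obtain ⟨j, hvj⟩ := hzo v hv'
  refine ⟨j, hvj.1, ?_⟩
  rw [hsum]
  simp [hvj.2 _ (hf _), (hg _).add_eq_two_of_zeroOne_adj hG hvj, mul_comm]

theorem exists_zeroOne_adj_of_isGraphDomain [Fintype α] (hdom : IsGraphDomain G) {i : α}
    (hi : ∃ x, G.Adj i x) : ∃ j, (ZeroOne G).Adj i j := by
  obtain ⟨x, hix⟩ := hi
  have hG : ∃ i j, G.Adj i j := ⟨i, x, hix⟩
  classical
  by_contra! hno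
  have hA : ∀ q, G.Adj i q → ∃ a, IsBasicCover G 1 a ∧ a i = 1 ∧ a q = 1 := by
    intro q hiq
    have : ¬ ∀ a, IsBasicCover G 1 a → a i + a q = 1 := fun h => hno q ⟨hiq, h⟩
    push Not at this
    obtain ⟨a, ha, hne⟩ := this
    have := ha.1.2 i q hiq
    have := ha.apply_le hG le_rfl i
    have := ha.apply_le hG le_rfl q
    exact ⟨a, ha, by omega, by omega⟩
  have hB : ∀ r, ∃ a, IsBasicCover G 1 a ∧ a i = 1 ∧ (G.Adj i r → a r = 1) := fun r =>
    if hir : G.Adj i r then (hA r hir).imp fun _ ha => ⟨ha.1, ha.2.1, fun _ => ha.2.2⟩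
    else (hA x hix).imp fun _ ha => ⟨ha.1, ha.2.1, fun h => absurd h hir⟩
  choose B hB using hB
  have hcard : 0 < Fintype.card α := Fintype.card_pos_iff.mpr ⟨i⟩
  have hc : IsBasicCover G (Fintype.card α) (∑ r, B r) := by
    simpa [Equiv.sum_comp] using hdom (Fintype.card α) 0 (by omega)
      (B ∘ (Fintype.equivFin α).symm) Fin.elim0 (fun p => (hB _).1) (fun q => q.elim0)
  have hci : (∑ r, B r) i = Fintype.card α := by simp [Finset.sum_apply, (hB _).2.1]
  obtain ⟨q, hiq, htight⟩ := hc.exists_tight hG hcard (v := i) (by omega)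
  have hcq : B q q ≤ (∑ r, B r) q := by
    simpa [Finset.sum_apply] using Finset.single_le_sum (fun r _ => Nat.zero_le (B r q))
      (Finset.mem_univ q)
  have := (hB q).2.2 hiq
  omega

/-- If `G` has at least one edge, then `G` is a domain if and only if
`G^{0-1}` has no isolated vertices, i.e. every vertex of `G^{0-1}` (that is, every
non-isolated vertex of `G`) lies on an edge of `G^{0-1}`. -/
theorem domain_iff_zeroOne_no_isolated (G : SimpleGraph V) (h : ∃ i j : V, G.Adj i j) :
    IsGraphDomain G ↔ ∀ i : V, (∃ x, G.Adj i x) → ∃ j : V, (ZeroOne G).Adj i j :=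
  ⟨fun hdom _ hi => exists_zeroOne_adj_of_isGraphDomain hdom hi,
    isGraphDomain_of_forall_exists_zeroOne_adj h⟩
end
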